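/- arXiv:2310.14387 — 2 statements merged into one kernel-verified Lean document; each statement's English description precedes it below -/
import Mathlib

section
/- Let A be a self-adjoint trace-free operator on a 3-dimensional real inner product space with det(A) > 0 and largest eigenvalue α. Then (2/3)|A|² ≥ α² > (1/2)|A|². -/
/-!
Over an orthonormal eigenbasis the hypotheses say that the eigenvalues `α ≥ β ≥ γ` satisfy
`α + β + γ = 0` and `αβγ > 0`, while `|A|² = α² + β² + γ²`. Since `β + γ = -α`, one has
`β² + γ² ≥ α²/2`, which is the upper bound. As `α > 0`, also `βγ > 0`, so
`α² = (β + γ)² > β² + γ²`, which is the lower bound.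
-/

open Matrix

namespace Matrix.IsHermitian

variable {n 𝕜 : Type*} [RCLike 𝕜] [Fintype n] [DecidableEq n] {A : Matrix n n 𝕜}

theorem trace_cfc (hA : A.IsHermitian) (f : ℝ → ℝ) :
    (cfc f A).trace = ∑ i, (f (hA.eigenvalues i) : 𝕜) := by
  rw [hA.cfc_eq, IsHermitian.cfc, Unitary.conjStarAlgAut_apply, trace_mul_cycle,
    Unitary.coe_star_mul_self, one_mul, trace_diagonal]
  rfl

theorem trace_conjTranspose_mul_self (hA : A.IsHermitian) :
    (Aᴴ * A).trace = ∑ i, (hA.eigenvalues i : 𝕜) ^ 2 := by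
  rw [hA.eq, ← sq, ← cfc_pow_id (R := ℝ) A 2 hA.isSelfAdjoint, hA.trace_cfc]
  push_cast
  rfl

end Matrix.IsHermitian

@[to_additive]
theorem Equiv.Perm.prod_comp_eq_of_comp_eq {ι α M : Type*} [Fintype ι] [CommMonoid M]
    {f v : ι → α} (σ : Equiv.Perm ι) (h : f ∘ σ = v) (g : α → M) :
    ∏ i, g (f i) = ∏ i, g (v i) := by
  rw [← h, ← Equiv.prod_comp σ]
  rfl

theorem sq_le_two_thirds_mul_sum_sq {a b c : ℝ} (h : a + b + c = 0) :
    a ^ 2 ≤ 2 / 3 * (a ^ 2 + b ^ 2 + c ^ 2) := by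
  obtain rfl : a = -(b + c) := by linarith
  nlinarith [sq_nonneg (b - c)]

theorem half_mul_sum_sq_lt_sq {a b c : ℝ} (h : a + b + c = 0) (hprod : 0 < a * b * c)
    (hba : b ≤ a) (hcb : c ≤ b) : 1 / 2 * (a ^ 2 + b ^ 2 + c ^ 2) < a ^ 2 := by
  have ha : 0 < a := by
    by_contra! ha
    have hb : b = 0 := by linarith
    simp [hb] at hprod
  have hbc : 0 < b * c := by nlinarith
  nlinarith

/-- For a self-adjoint trace-free operator on a 3-dimensional real inner product space with
`det A > 0` and largest eigenvalue `α`, one has `(2/3)|A|² ≥ α² > (1/2)|A|²`. -/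
theorem stmt_3 (A : Matrix (Fin 3) (Fin 3) ℝ) (hA : A.IsHermitian)
    (htr : A.trace = 0) (hdet : 0 < A.det) (α β γ : ℝ)
    (hαβ : β ≤ α) (hβγ : γ ≤ β)
    (heig : ∃ σ : Equiv.Perm (Fin 3), hA.eigenvalues ∘ σ = ![α, β, γ]) :
    (2 / 3) * Matrix.trace (Aᵀ * A) ≥ α ^ 2 ∧ α ^ 2 > (1 / 2) * Matrix.trace (Aᵀ * A) := by
  obtain ⟨σ, hσ⟩ := heig
  have hsum : α + β + γ = 0 := by
    rw [← htr, hA.trace_eq_sum_eigenvalues, σ.sum_comp_eq_of_comp_eq hσ]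
    simp [Fin.sum_univ_three]
  have hprod : 0 < α * β * γ := by
    rwa [hA.det_eq_prod_eigenvalues, σ.prod_comp_eq_of_comp_eq hσ, Fin.prod_univ_three] at hdet
  have hnorm : (Aᵀ * A).trace = α ^ 2 + β ^ 2 + γ ^ 2 := by
    rw [← conjTranspose_eq_transpose_of_trivial, hA.trace_conjTranspose_mul_self,
      σ.sum_comp_eq_of_comp_eq hσ (fun x ↦ (RCLike.ofReal x : ℝ) ^ 2)]
    simp [Fin.sum_univ_three]
  rw [hnorm]
  exact ⟨sq_le_two_thirds_mul_sum_sq hsum, half_mul_sum_sq_lt_sq hsum hprod hαβ hβγ⟩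
end

section
/- For a self-adjoint trace-free operator A on a 3-dimensional real inner product space with det(A) > 0, the largest eigenvalue is given by Cardano's formula: α = 2^{2/3} · Re( (det(A) + i·√(|A|⁶/54 − (det A)²))^{1/3} ), where the cube root denotes the principal branch with positive real part. -/
/-!
Write `q = α² + β² + γ²` and `d = αβγ`. Since `α + β + γ = 0`, the eigenvalues are the roots of
`x³ - (q/2) x - d`, and `d > 0` forces `β, γ < 0`, so `α` is its only positive root. The
discriminant identity `q³/54 - d² = ((α - β)(β - γ)(γ - α))²/27` makes the square root real and
gives `z = d + i√(q³/54 - d²)` the modulus `(q³/54)^{1/2}`. Viète's substitution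
`x = 2^{2/3}|z|^{1/3} cos(arg z / 3)` then solves the cubic by the triple-angle formula, and this
`x` is positive because `arg z / 3 ∈ (-π/3, π/3]`; it is `2^{2/3} Re z^{1/3}`.
-/

open Matrix

namespace Matrix.IsHermitian

variable {𝕜 n : Type*} [RCLike 𝕜] [Fintype n] [DecidableEq n] {A : Matrix n n 𝕜}

lemma trace_mul_self_eq_sum_sq_eigenvalues (hA : A.IsHermitian) :
    (A * A).trace = ∑ i, (hA.eigenvalues i : 𝕜) ^ 2 := by
  conv_lhs => rw [hA.spectral_theorem, ← map_mul]
  rw [Unitary.conjStarAlgAut_apply, trace_mul_cycle,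
    Unitary.coe_star_mul_self, one_mul, diagonal_mul_diagonal, trace_diagonal]
  simp [sq]

end Matrix.IsHermitian

namespace Complex

lemma cpow_one_third_re_pos {z : ℂ} (hz : z ≠ 0) : 0 < (z ^ (1 / 3 : ℂ)).re := by
  rw [show (1 / 3 : ℂ) = ((1 / 3 : ℝ) : ℂ) by push_cast; rfl, cpow_ofReal_re]
  refine mul_pos (Real.rpow_pos_of_pos (norm_pos_iff.2 hz) _) (Real.cos_pos_of_mem_Ioo ⟨?_, ?_⟩)
  · linarith [neg_pi_lt_arg z, Real.pi_pos]
  · linarith [arg_le_pi z, Real.pi_pos]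

/-- With `u = 2^{2/3}‖z‖^{1/3}` one has `u³ = 4‖z‖` and `u² = 2q/3`, so for `c = cos(arg z / 3)`
the cubic reduces to `‖z‖ (4c³ - 3c) = ‖z‖ cos (arg z) = Re z`. -/
lemma cubic_eq_of_two_rpow_mul_cpow_one_third_re {z : ℂ} {q : ℝ} (hq : 0 ≤ q)
    (hz : ‖z‖ ^ 2 = q ^ 3 / 54) :
    (2 : ℝ) ^ ((2 : ℝ) / 3) * (z ^ (1 / 3 : ℂ)).re
      * (((2 : ℝ) ^ ((2 : ℝ) / 3) * (z ^ (1 / 3 : ℂ)).re) ^ 2 - q / 2) = z.re := by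
  rw [show (1 / 3 : ℂ) = ((1 / 3 : ℝ) : ℂ) by push_cast; rfl, cpow_ofReal_re, ← mul_assoc]
  set u := (2 : ℝ) ^ ((2 : ℝ) / 3) * ‖z‖ ^ (1 / 3 : ℝ)
  have hu3 : u ^ 3 = 4 * ‖z‖ := by
    rw [mul_pow, ← Real.rpow_mul_natCast (by norm_num), ← Real.rpow_mul_natCast (norm_nonneg z)]
    norm_num
  have hu2 : u ^ 2 = 2 * q / 3 := by
    refine (pow_left_inj₀ (by positivity) (by positivity) three_ne_zero).1 ?_
    rw [← pow_mul, show 2 * 3 = 3 * 2 by rfl, pow_mul, hu3]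
    linear_combination 16 * hz
  set c := Real.cos (arg z * (1 / 3))
  have hre : z.re = ‖z‖ * (4 * c ^ 3 - 3 * c) := by
    rw [← norm_mul_cos_arg, ← Real.cos_three_mul]
    ring_nf
  linear_combination (c ^ 3 - 3 * c / 4) * hu3 + (3 / 4 * u * c) * hu2 - hre

end Complex

section CubicRoots

variable {α β γ : ℝ}

lemma sq_add_sq_add_sq_pow_three_div_sub_sq (h : α + β + γ = 0) :
    (α ^ 2 + β ^ 2 + γ ^ 2) ^ 3 / 54 - (α * β * γ) ^ 2
      = ((α - β) * (β - γ) * (γ - α)) ^ 2 / 27 := by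
  rw [show γ = -(α + β) by linarith]
  ring

lemma eq_of_pos_of_mul_sq_sub_eq (h : α + β + γ = 0) (hαβ : β ≤ α) (hβγ : γ ≤ β)
    (hprod : 0 < α * β * γ) {x : ℝ} (hx : 0 < x)
    (hcubic : x * (x ^ 2 - (α ^ 2 + β ^ 2 + γ ^ 2) / 2) = α * β * γ) : x = α := by
  have hγ : γ = -(α + β) := by linarith
  subst hγ
  have hβ : β < 0 := by nlinarith
  have hroots : (x - α) * ((x - β) * (x + α + β)) = 0 := by linear_combination hcubic
  rcases mul_eq_zero.1 hroots with h | h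
  · linarith
  · rcases mul_eq_zero.1 h with h | h <;> nlinarith

theorem eq_two_rpow_mul_cpow_one_third_re (h : α + β + γ = 0) (hαβ : β ≤ α) (hβγ : γ ≤ β)
    (hprod : 0 < α * β * γ) :
    α = (2 : ℝ) ^ ((2 : ℝ) / 3) *
      ((((α * β * γ : ℝ) : ℂ) + Complex.I *
        ((Real.sqrt ((α ^ 2 + β ^ 2 + γ ^ 2) ^ 3 / 54 - (α * β * γ) ^ 2) : ℝ) : ℂ)) ^
          ((1 : ℂ) / 3)).re := by
  set q := α ^ 2 + β ^ 2 + γ ^ 2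
  set z : ℂ := ((α * β * γ : ℝ) : ℂ) + Complex.I * (Real.sqrt (q ^ 3 / 54 - (α * β * γ) ^ 2) : ℂ)
  have hdisc : 0 ≤ q ^ 3 / 54 - (α * β * γ) ^ 2 := by
    rw [sq_add_sq_add_sq_pow_three_div_sub_sq h]
    positivity
  have hre : z.re = α * β * γ := by simp [z]
  have hnorm : ‖z‖ ^ 2 = q ^ 3 / 54 := by
    rw [Complex.sq_norm, Complex.normSq_apply, hre]
    simp only [z, Complex.add_im, Complex.ofReal_im, Complex.mul_im, Complex.I_re,
      Complex.I_im, Complex.ofReal_re]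
    nlinarith [Real.sq_sqrt hdisc]
  have hz : z ≠ 0 := fun h0 => by rw [h0, Complex.zero_re] at hre; linarith
  refine (eq_of_pos_of_mul_sq_sub_eq h hαβ hβγ hprod ?_ ?_).symm
  · exact mul_pos (by positivity) (Complex.cpow_one_third_re_pos hz)
  · rw [← hre]
    exact Complex.cubic_eq_of_two_rpow_mul_cpow_one_third_re (by positivity) hnorm

end CubicRoots

/-- Cardano's formula for the top eigenvalue: for a self-adjoint trace-free operator on a
3-dimensional real inner product space with `det A > 0`,
`α = 2^{2/3}·Re((det A + i√(|A|⁶/54 − (det A)²))^{1/3})`, the cube root being the principal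
branch. -/
theorem stmt_9 (A : Matrix (Fin 3) (Fin 3) ℝ) (hA : A.IsHermitian)
    (htr : A.trace = 0) (hdet : 0 < A.det) (α β γ : ℝ)
    (hαβ : β ≤ α) (hβγ : γ ≤ β)
    (heig : ∃ σ : Equiv.Perm (Fin 3), hA.eigenvalues ∘ σ = ![α, β, γ]) :
    α = (2 : ℝ) ^ ((2 : ℝ) / 3) *
      (((A.det : ℂ) + Complex.I *
        ((Real.sqrt ((Matrix.trace (Aᵀ * A)) ^ 3 / 54 - A.det ^ 2) : ℝ) : ℂ)) ^
          ((1 : ℂ) / 3)).re := by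
  obtain ⟨σ, hσ⟩ := heig
  have hev (i : Fin 3) : hA.eigenvalues (σ i) = ![α, β, γ] i := congrFun hσ i
  have hsum (f : ℝ → ℝ) : ∑ i, f (hA.eigenvalues i) = f α + f β + f γ := by
    rw [← Equiv.sum_comp σ, Fin.sum_univ_three, hev 0, hev 1, hev 2]
    rfl
  have htrace : α + β + γ = 0 := by
    rw [← hsum fun x ↦ x, ← htr, hA.trace_eq_sum_eigenvalues]
    simp
  have hdet' : α * β * γ = A.det := by
    rw [hA.det_eq_prod_eigenvalues, ← Equiv.prod_comp σ, Fin.prod_univ_three, hev 0, hev 1, hev 2]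
    rfl
  have hnormsq : α ^ 2 + β ^ 2 + γ ^ 2 = (Aᵀ * A).trace := by
    rw [(isHermitian_iff_isSymm.1 hA).eq, hA.trace_mul_self_eq_sum_sq_eigenvalues]
    simpa using (hsum (· ^ 2)).symm
  rw [← hdet', ← hnormsq]
  exact eq_two_rpow_mul_cpow_one_third_re htrace hαβ hβγ (hdet'.symm ▸ hdet)
end
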